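/- Let I be an instance with types satisfying the supply condition, let J ∈ A_γ(Q(I), h) for some signpost sequence γ, and let E_J be the output of the greedy & parity correction algorithm. Suppose the type-oblivious solution T_J does not satisfy type parity (A), let t* be the over-represented type in T_J, and let ℓ = Prefix(V(E_J), V(T_J)) < |C|. Then every candidate c of type t* with E_J(c) = 1 satisfies Rank_I(c) ≤ ℓ, where Rank_I(c) is the position of c in the order ≻. -/

import Mathlib

open Finset

/-- A signpost sequence: `γ 0 = 0`, `γ n ∈ [n-1, n]` for `n ≥ 1`, and the
disjunction property. -/
def Signpost (γ : ℕ → ℝ) : Prop :=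
  γ 0 = 0 ∧
  (∀ n : ℕ, 1 ≤ n → ((n : ℝ) - 1 ≤ γ n ∧ γ n ≤ n)) ∧
  ((∃ k : ℕ, 2 ≤ k ∧ γ k = (k : ℝ) - 1) → ∀ l : ℕ, 1 ≤ l → γ l < l) ∧
  ((∃ k : ℕ, 1 ≤ k ∧ γ k = (k : ℝ)) → ∀ l : ℕ, 2 ≤ l → (l : ℝ) - 1 < γ l)

/-- The rounding rule `R_γ` of a signpost sequence, as a set-valued map:
`R_γ(0) = {0}`, `R_γ(t) = {n}` for `t ∈ (γ n, γ (n+1))`, and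
`R_γ(t) = {n-1, n}` when `t = γ n > 0`. -/
def roundSet (γ : ℕ → ℝ) (t : ℝ) : Set ℕ :=
  {k | (t = 0 ∧ k = 0) ∨ (γ k < t ∧ t < γ (k + 1)) ∨ (0 < t ∧ (t = γ k ∨ t = γ (k + 1)))}

/-- The divisor method solution set `A_γ(Q, h)`. -/
def divisorSet (γ : ℕ → ℝ) {n : ℕ} (Q : Fin n → ℝ) (h : ℕ) : Set (Fin n → ℕ) :=
  {S | (∑ i, S i) = h ∧ ∃ lam : ℝ, 0 < lam ∧ ∀ i, S i ∈ roundSet γ (Q i / lam)}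

/-- The two candidate types. -/
inductive MType
  | f | m
deriving DecidableEq

instance instFintypeMType : Fintype MType where
  elems := {MType.f, MType.m}
  complete := fun x => by cases x <;> decide

/-- The other type. -/
def MType.other : MType → MType
  | .f => .m
  | .m => .f

/-- An instance of the apportionment problem with type parity: a finite candidate
set `C`, a party map, a (nonnegative real) vote map, a type map, a house size
`h ≥ 1` and a total order (the field `ord`) refining the votes. -/
structure TypedInstance (n : ℕ) (C : Type) [Fintype C] [DecidableEq C] where
  ord : LinearOrder C
  party : C → Fin n
  votes : C → ℝ
  votes_nonneg : ∀ c, 0 ≤ votes c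
  mtype : C → MType
  h : ℕ
  h_pos : 1 ≤ h
  refines : ∀ c c' : C, votes c' < votes c → ord.lt c' c

namespace TypedInstance

variable {n : ℕ} {C : Type} [Fintype C] [DecidableEq C]

/-- The candidates of party `i`. -/
def Ci (I : TypedInstance n C) (i : Fin n) : Finset C :=
  univ.filter fun c => I.party c = i

/-- The candidates of type `t`. -/
def Ct (I : TypedInstance n C) (t : MType) : Finset C :=
  univ.filter fun c => I.mtype c = t

/-- The candidates of party `i` and type `t`. -/
def Cit (I : TypedInstance n C) (i : Fin n) (t : MType) : Finset C :=
  univ.filter fun c => I.party c = i ∧ I.mtype c = t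

/-- The party vote totals `Q(I)`. -/
def Q (I : TypedInstance n C) : Fin n → ℝ := fun i => ∑ c ∈ I.Ci i, I.votes c

/-- The party × type vote totals `P(I)`. -/
def P (I : TypedInstance n C) : Fin n → MType → ℝ := fun i t => ∑ c ∈ I.Cit i t, I.votes c

/-- The supply matrix `S(I)`. -/
def S (I : TypedInstance n C) : Fin n → MType → ℕ := fun i t => (I.Cit i t).card

/-- The supply condition: `|C_i^t| ≥ ⌈h/2⌉` for every party `i` and type `t`. -/
def SupplyCond (I : TypedInstance n C) : Prop :=
  ∀ (i : Fin n) (t : MType), (I.h + 1) / 2 ≤ (I.Cit i t).card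

/-- Type parity condition (A): the numbers of elected candidates of the two types
differ by exactly `h mod 2`. Allocations are represented by the finset of elected
candidates. -/
def CondA (I : TypedInstance n C) (E : Finset C) : Prop :=
  (((E.filter fun c => I.mtype c = MType.f).card : ℤ) -
    ((E.filter fun c => I.mtype c = MType.m).card : ℤ)).natAbs = I.h % 2

instance (I : TypedInstance n C) (E : Finset C) : Decidable (I.CondA E) := by
  unfold CondA; infer_instance

/-- The number of elected candidates of each party. -/
def partyCount (I : TypedInstance n C) (E : Finset C) : Fin n → ℕ :=
  fun i => (E.filter fun c => I.party c = i).card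

/-- The number of elected candidates of each type. -/
def typeCount (I : TypedInstance n C) (E : Finset C) : MType → ℕ :=
  fun t => (E.filter fun c => I.mtype c = t).card

/-- Party proportionality condition (B) w.r.t. a signpost sequence `γ`. -/
def CondB (I : TypedInstance n C) (γ : ℕ → ℝ) (E : Finset C) : Prop :=
  ∃ J ∈ divisorSet γ I.Q I.h, ∀ i, I.partyCount E i = J i

/-- The set `X(I, γ)` of feasible allocations. -/
def X (I : TypedInstance n C) (γ : ℕ → ℝ) : Set (Finset C) :=
  {E | I.CondA E ∧ I.CondB γ E}

/-- The polytope `Z(I, J, γ)` of fractional allocations. -/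
def Z (I : TypedInstance n C) (J : Fin n → ℕ) : Set (Fin n → MType → ℝ) :=
  {y | (∀ t : MType, ((I.h / 2 : ℕ) : ℝ) ≤ ∑ i, y i t) ∧
       (∀ i : Fin n, y i MType.f + y i MType.m = (J i : ℝ)) ∧
       (∀ (i : Fin n) (t : MType), 0 ≤ y i t ∧ y i t ≤ ((I.Cit i t).card : ℝ))}

/-- The scaled instance `αI` (same candidate order). -/
def scale (I : TypedInstance n C) (α : ℝ) (hα : 0 < α) : TypedInstance n C where
  ord := I.ord
  party := I.party
  votes := fun c => α * I.votes c
  votes_nonneg := fun c => mul_nonneg hα.le (I.votes_nonneg c)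
  mtype := I.mtype
  h := I.h
  h_pos := I.h_pos
  refines := fun c c' hlt => I.refines c c' (lt_of_mul_lt_mul_left hlt hα.le)

/-- `G` is a voting increment of `I` in candidate `c`: identical to `I` except
that `c` garners strictly more votes. -/
def VotingIncrement (I G : TypedInstance n C) (c : C) : Prop :=
  G.party = I.party ∧ G.mtype = I.mtype ∧ G.h = I.h ∧
  I.votes c < G.votes c ∧ ∀ c' : C, c' ≠ c → G.votes c' = I.votes c'

/-- The rank of a candidate in the order `≻`: position `1` is the top candidate. -/
def rank (I : TypedInstance n C) (c : C) : ℕ :=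
  letI := I.ord
  (univ.filter fun c' => c ≤ c').card

/-- The top `k` candidates of a subset `D` according to the order of `I`. -/
def topOf (I : TypedInstance n C) (D : Finset C) (k : ℕ) : Finset C :=
  letI := I.ord
  D.filter fun c => (D.filter fun c' => c ≤ c').card ≤ k

/-- The type-oblivious solution `T_J`: in every party `i`, the top `J i`
candidates of `C_i` are elected. -/
def oblivious (I : TypedInstance n C) (J : Fin n → ℕ) : Finset C :=
  univ.filter fun c => c ∈ I.topOf (I.Ci (I.party c)) (J (I.party c))

/-- The over-represented type of an allocation (type `f` in case of a tie). -/
def overType (I : TypedInstance n C) (E : Finset C) : MType :=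
  if I.typeCount E MType.m ≤ I.typeCount E MType.f then MType.f else MType.m

/-- One parity-correction swap: the worst-ranked elected candidate of the
over-represented type is replaced by the best-ranked unelected candidate of the
same party and of the under-represented type (if any; otherwise nothing happens). -/
def swapStep (I : TypedInstance n C) (E : Finset C) : Finset C :=
  letI := I.ord
  let t := I.overType E
  let elected := E.filter fun c => I.mtype c = t
  if hE : elected.Nonempty then
    let s := elected.min' hE
    let pool := univ.filter fun c => c ∉ E ∧ I.party c = I.party s ∧ I.mtype c = t.other
    if hp : pool.Nonempty then insert (pool.max' hp) (E.erase s) else E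
  else E

/-- The parity-correction loop (with fuel). -/
def greedyAux (I : TypedInstance n C) : ℕ → Finset C → Finset C
  | 0, E => E
  | k + 1, E => if I.CondA E then E else greedyAux I k (I.swapStep E)

/-- The output `E_J` of the greedy & parity correction algorithm. -/
def greedy (I : TypedInstance n C) (J : Fin n → ℕ) : Finset C :=
  greedyAux I I.h (I.oblivious J)

/-- The greedy & parity correction mechanism `M^G`. -/
def MG (I : TypedInstance n C) (γ : ℕ → ℝ) : Set (Finset C) :=
  {E | ∃ J ∈ divisorSet γ I.Q I.h, E = I.greedy J}

/-- Two allocations agree on all candidates of rank at most `l`. -/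
def agreeUpTo (I : TypedInstance n C) (E₁ E₂ : Finset C) (l : ℕ) : Prop :=
  ∀ c : C, I.rank c ≤ l → (c ∈ E₁ ↔ c ∈ E₂)

instance (I : TypedInstance n C) (E₁ E₂ : Finset C) (l : ℕ) :
    Decidable (I.agreeUpTo E₁ E₂ l) := by
  unfold agreeUpTo; infer_instance

/-- The length of the common prefix of two allocations (w.r.t. the ranking). -/
def prefixLen (I : TypedInstance n C) (E₁ E₂ : Finset C) : ℕ :=
  ((Finset.range (Fintype.card C + 1)).filter fun l => I.agreeUpTo E₁ E₂ l).sup id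

/-- The vote-leading type (type `f` in case of a tie; this tie-breaking rule is
scaling invariant). -/
noncomputable def voteLeading (I : TypedInstance n C) : MType :=
  if (∑ c ∈ I.Ct MType.f, I.votes c) < (∑ c ∈ I.Ct MType.m, I.votes c) then MType.m
  else MType.f

/-- The parity marginal `φ(I)`: for even `h` both types get `h/2`; for odd `h` the
vote-leading type gets `⌈h/2⌉`. -/
noncomputable def parityMarginal (I : TypedInstance n C) : MType → ℕ :=
  fun t => if t = I.voteLeading then (I.h + 1) / 2 else I.h / 2

end TypedInstance

/-- `(x, lam, mu)` is a `δ`-biproportional solution of the two-dimensional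
instance with supply `(P, S, J, φ)`. -/
def IsBipropSol (δ : ℕ → ℝ) {n : ℕ} (P : Fin n → MType → ℝ) (S : Fin n → MType → ℕ)
    (J : Fin n → ℕ) (φ : MType → ℕ) (x : Fin n → MType → ℕ)
    (lam : Fin n → ℝ) (mu : MType → ℝ) : Prop :=
  (∀ i, 0 < lam i) ∧ (∀ t, 0 < mu t) ∧
  (∀ (i : Fin n) (t : MType), x i t < S i t → x i t ∈ roundSet δ (P i t * lam i * mu t)) ∧
  (∀ i : Fin n, x i MType.f + x i MType.m = J i) ∧
  (∀ t : MType, (∑ i, x i t) = φ t) ∧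
  (∀ (i : Fin n) (t : MType), x i t ≤ S i t)

/-- The set `B_δ(P, S, J, φ)` of `δ`-biproportional solutions. -/
def bipropSet (δ : ℕ → ℝ) {n : ℕ} (P : Fin n → MType → ℝ) (S : Fin n → MType → ℕ)
    (J : Fin n → ℕ) (φ : MType → ℕ) : Set (Fin n → MType → ℕ) :=
  {x | ∃ lam mu, IsBipropSol δ P S J φ x lam mu}

/-- `δ`-biproportional solutions of a two-dimensional instance `(P, J, φ)`
without supply bounds. -/
def IsBipropSolNS (δ : ℕ → ℝ) {n : ℕ} (P : Fin n → MType → ℝ)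
    (J : Fin n → ℕ) (φ : MType → ℕ) (x : Fin n → MType → ℕ)
    (lam : Fin n → ℝ) (mu : MType → ℝ) : Prop :=
  (∀ i, 0 < lam i) ∧ (∀ t, 0 < mu t) ∧
  (∀ (i : Fin n) (t : MType), x i t ∈ roundSet δ (P i t * lam i * mu t)) ∧
  (∀ i : Fin n, x i MType.f + x i MType.m = J i) ∧
  (∀ t : MType, (∑ i, x i t) = φ t)

/-- The set `B_δ(P, J, φ)` for instances without supply bounds. -/
def bipropSetNS (δ : ℕ → ℝ) {n : ℕ} (P : Fin n → MType → ℝ)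
    (J : Fin n → ℕ) (φ : MType → ℕ) : Set (Fin n → MType → ℕ) :=
  {x | ∃ lam mu, IsBipropSolNS δ P J φ x lam mu}

/-- `F` is a fair share (matrix scaling) of the two-dimensional instance
`(P, J, φ)`. -/
def IsFairShare {n : ℕ} (P : Fin n → MType → ℝ) (J : Fin n → ℕ) (φ : MType → ℕ)
    (F : Fin n → MType → ℝ) : Prop :=
  ∃ (lam : Fin n → ℝ) (mu : MType → ℝ),
    (∀ i, 0 < lam i) ∧ (∀ t, 0 < mu t) ∧ (∀ i t, 0 < F i t) ∧
    (∀ (i : Fin n) (t : MType), F i t = P i t * lam i * mu t) ∧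
    (∀ i : Fin n, F i MType.f + F i MType.m = (J i : ℝ)) ∧
    (∀ t : MType, (∑ i, F i t) = (φ t : ℝ))

namespace TypedInstance

variable {n : ℕ} {C : Type} [Fintype C] [DecidableEq C]

/-- The allocation `E_x` electing, for every party `i` and type `t`, the top
`x i t` candidates of `C_i^t`. -/
def allocOf (I : TypedInstance n C) (x : Fin n → MType → ℕ) : Finset C :=
  univ.filter fun c =>
    c ∈ I.topOf (I.Cit (I.party c) (I.mtype c)) (x (I.party c) (I.mtype c))

/-- The `δ`-biproportional parity mechanism `M^B_δ`. -/
def MB (I : TypedInstance n C) (δ γ : ℕ → ℝ) : Set (Finset C) :=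
  {E | ∃ J ∈ divisorSet γ I.Q I.h,
        ∃ x ∈ bipropSet δ I.P I.S J I.parityMarginal, E = I.allocOf x}

end TypedInstance

/-! The greedy loop preserves an invariant: every candidate it has removed from `T_J` has type
`t*`, every candidate it has added has the other type, and all of them are ranked below every
`t*`-candidate still elected. A swap removes the worst elected `t*`-candidate `s` and adds an
unelected candidate `b` of the same party; as `s` lies inside `T_J`, `b` outside, and `T_J` elects
the top candidates of every party, `b` is ranked below `s`. Since the two type counts always add
up to `h`, parity (A) can only fail while `t*` leads by at least two, so `t*` stays
over-represented throughout. Hence `E_J` and `T_J` agree on every candidate ranked at least as high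
as an elected `t*`-candidate `c`, i.e. `Rank c ≤ ℓ`. -/

theorem MType.ne_iff_eq_other {t t' : MType} : t' ≠ t ↔ t' = t.other := by
  cases t <;> cases t' <;> decide

theorem MType.other_ne (t : MType) : t.other ≠ t := by
  cases t <;> decide

section InsertErase

variable {α : Type*} [DecidableEq α] {E T : Finset α} {s b : α}

theorem insert_erase_sdiff_subset : insert b (E.erase s) \ T ⊆ insert b (E \ T) := by
  intro x
  simp only [mem_sdiff, mem_insert, mem_erase]
  tauto

theorem sdiff_insert_erase_subset : T \ insert b (E.erase s) ⊆ insert s (T \ E) := by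
  intro x
  simp only [mem_sdiff, mem_insert, mem_erase]
  tauto

end InsertErase

section TopPositions

variable {α : Type*} [LinearOrder α] (D : Finset α)

theorem strictAntiOn_card_filter_le : StrictAntiOn (fun c => #{c' ∈ D | c ≤ c'}) D := by
  intro a ha b hb hab
  refine card_lt_card ((ssubset_iff_of_subset fun x hx => ?_).mpr
    ⟨a, mem_filter.mpr ⟨ha, le_rfl⟩, by simp [hab]⟩)
  simp only [mem_filter] at hx ⊢
  exact ⟨hx.1, hab.le.trans hx.2⟩

theorem image_card_filter_le : D.image (fun c => #{c' ∈ D | c ≤ c'}) = Icc 1 #D := by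
  refine eq_of_subset_of_card_le (fun x hx => ?_) ?_
  · obtain ⟨c, hc, rfl⟩ := mem_image.mp hx
    exact mem_Icc.mpr
      ⟨card_pos.mpr ⟨c, by simp [hc]⟩, card_le_card (filter_subset (c ≤ ·) D)⟩
  · rw [card_image_of_injOn (strictAntiOn_card_filter_le D).injOn, Nat.card_Icc]
    omega

theorem card_filter_card_filter_le_le (k : ℕ) :
    #{c ∈ D | #{c' ∈ D | c ≤ c'} ≤ k} = min k #D := by
  have hinj := (strictAntiOn_card_filter_le D).injOn.mono
    (coe_subset.mpr (filter_subset (fun c => #{c' ∈ D | c ≤ c'} ≤ k) D))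
  rw [← card_image_of_injOn hinj, ← filter_image (p := (· ≤ k)), image_card_filter_le]
  have : {x ∈ Icc 1 #D | x ≤ k} = Icc 1 (min k #D) := by
    ext x
    simp only [mem_filter, mem_Icc]
    omega
  rw [this, Nat.card_Icc]
  omega

end TopPositions

namespace TypedInstance

variable {n : ℕ} {C : Type} [Fintype C] [DecidableEq C] (I : TypedInstance n C)

theorem rank_lt_rank {c c' : C} (h : I.ord.lt c c') : I.rank c' < I.rank c := by
  let _ := I.ord
  exact strictAntiOn_card_filter_le univ (mem_univ c) (mem_univ c') h

theorem rank_le_card (c : C) : I.rank c ≤ Fintype.card C := by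
  let _ := I.ord
  exact card_filter_le univ _

theorem le_prefixLen {E₁ E₂ : Finset C} {k : ℕ} (h : I.agreeUpTo E₁ E₂ k)
    (hk : k ≤ Fintype.card C) : k ≤ I.prefixLen E₁ E₂ :=
  le_sup (f := id) (mem_filter.mpr ⟨mem_range.mpr (Nat.lt_succ_of_le hk), h⟩)

theorem card_topOf (D : Finset C) (k : ℕ) : (I.topOf D k).card = min k D.card := by
  let _ := I.ord
  exact card_filter_card_filter_le_le D k

theorem topOf_subset {D : Finset C} {k : ℕ} : I.topOf D k ⊆ D :=
  filter_subset _ D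

theorem lt_of_mem_topOf_of_notMem {D : Finset C} {k : ℕ} {s b : C} (hs : s ∈ I.topOf D k)
    (hbD : b ∈ D) (hb : b ∉ I.topOf D k) : I.ord.lt b s := by
  let _ := I.ord
  simp only [topOf, mem_filter, not_and, not_le] at hs hb
  exact ((strictAntiOn_card_filter_le D).lt_iff_gt hs.1 hbD).mp (hs.2.trans_lt (hb hbD))

theorem mem_oblivious {J : Fin n → ℕ} {c : C} :
    c ∈ I.oblivious J ↔ c ∈ I.topOf (I.Ci (I.party c)) (J (I.party c)) := by
  simp [oblivious]

theorem lt_of_mem_oblivious_of_notMem {J : Fin n → ℕ} {s b : C} (hs : s ∈ I.oblivious J)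
    (hb : b ∉ I.oblivious J) (hparty : I.party b = I.party s) : I.ord.lt b s := by
  rw [mem_oblivious] at hs hb
  rw [hparty] at hb
  exact I.lt_of_mem_topOf_of_notMem hs (by simp [Ci, hparty]) hb

theorem typeCount_add_typeCount_other (E : Finset C) (t : MType) :
    I.typeCount E t + I.typeCount E t.other = E.card := by
  rw [← card_filter_add_card_filter_not (s := E) (fun c => I.mtype c = t)]
  simp only [typeCount, MType.ne_iff_eq_other]

theorem h_le_card_Ci (hsup : I.SupplyCond) (i : Fin n) : I.h ≤ (I.Ci i).card := by
  have hsplit : (I.Cit i .f).card + (I.Cit i .m).card = (I.Ci i).card := by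
    rw [← card_filter_add_card_filter_not (s := I.Ci i) (fun c => I.mtype c = .f)]
    simp only [Cit, Ci, filter_filter, MType.ne_iff_eq_other, MType.other]
  have := hsup i .f
  have := hsup i .m
  omega

theorem card_oblivious (hsup : I.SupplyCond) {J : Fin n → ℕ} (hJ : ∑ i, J i = I.h) :
    (I.oblivious J).card = I.h := by
  have hparty (i : Fin n) : ((I.oblivious J).filter fun c => I.party c = i).card = J i := by
    have hfiber : ((I.oblivious J).filter fun c => I.party c = i) = I.topOf (I.Ci i) (J i) := by
      ext c
      simp only [mem_filter, mem_oblivious]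
      refine ⟨fun ⟨hc, hci⟩ => hci ▸ hc, fun hc => ?_⟩
      have hci : I.party c = i := (mem_filter.mp (I.topOf_subset hc)).2
      exact ⟨hci ▸ hc, hci⟩
    have hJi : J i ≤ I.h := hJ ▸ single_le_sum (fun _ _ => Nat.zero_le _) (mem_univ i)
    rw [hfiber, card_topOf, min_eq_left (hJi.trans (I.h_le_card_Ci hsup i))]
  rw [card_eq_sum_card_fiberwise (fun c _ => mem_univ (I.party c)),
    sum_congr rfl fun i _ => hparty i, hJ]

theorem overType_eq_of_lt {E : Finset C} {t : MType}
    (h : I.typeCount E t.other < I.typeCount E t) : I.overType E = t := by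
  cases t <;> simp only [overType, MType.other] at h ⊢ <;> split_ifs <;> first | rfl | omega

theorem typeCount_insert_erase_of_notMem {E : Finset C} {s b : C} (hbE : b ∉ E)
    (hbs : I.mtype s ≠ I.mtype b) :
    I.typeCount (insert b (E.erase s)) (I.mtype b) = I.typeCount E (I.mtype b) + 1 := by
  simp only [typeCount, filter_insert, if_pos, filter_erase]
  rw [erase_eq_of_notMem (by simp [hbs]), card_insert_of_notMem (by simp [hbE])]

theorem typeCount_insert_erase_of_mem {E : Finset C} {s b : C} (hsE : s ∈ E)
    (hbs : I.mtype b ≠ I.mtype s) :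
    I.typeCount (insert b (E.erase s)) (I.mtype s) + 1 = I.typeCount E (I.mtype s) := by
  simp only [typeCount, filter_insert, hbs, if_false, filter_erase]
  exact card_erase_add_one (by simp [hsE])

structure ParityInvariant (T : Finset C) (t : MType) (E : Finset C) : Prop where
  added_mtype : ∀ c ∈ E \ T, I.mtype c = t.other
  removed_mtype : ∀ c ∈ T \ E, I.mtype c = t
  added_lt : ∀ c ∈ E \ T, ∀ c' ∈ E, I.mtype c' = t → I.ord.lt c c'
  removed_lt : ∀ c ∈ T \ E, ∀ c' ∈ E, I.mtype c' = t → I.ord.lt c c'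
  typeCount_le : I.typeCount E t.other ≤ I.typeCount E t
  card_eq : E.card = I.h

namespace ParityInvariant

variable {I : TypedInstance n C} {T E : Finset C} {t : MType}

theorem of_oblivious (hsup : I.SupplyCond) {J : Fin n → ℕ} (hJ : ∑ i, J i = I.h)
    (hover : I.typeCount (I.oblivious J) t.other < I.typeCount (I.oblivious J) t) :
    ParityInvariant I (I.oblivious J) t (I.oblivious J) where
  added_mtype := by simp
  removed_mtype := by simp
  added_lt := by simp
  removed_lt := by simp
  typeCount_le := hover.le
  card_eq := I.card_oblivious hsup hJ

/-- Since both type counts add up to `h`, their difference has the parity of `h`; so when (A)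
fails the surplus of `t` is at least two. -/
theorem typeCount_other_add_two_le (hinv : ParityInvariant I T t E) (hA : ¬ I.CondA E) :
    I.typeCount E t.other + 2 ≤ I.typeCount E t := by
  have hsum := I.typeCount_add_typeCount_other E t
  have hle := hinv.typeCount_le
  rw [hinv.card_eq] at hsum
  have hA' : ¬ ((I.typeCount E .f : ℤ) - I.typeCount E .m).natAbs = I.h % 2 := hA
  rw [Int.natAbs_eq_iff] at hA'
  cases t <;> simp only [MType.other] at hsum hle ⊢ <;> omega

theorem insert_erase (hinv : ParityInvariant I T t E) {s b : C} (hsE : s ∈ E)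
    (hst : I.mtype s = t) (hs_min : ∀ c ∈ E, I.mtype c = t → I.ord.le s c) (hbE : b ∉ E)
    (hbt : I.mtype b = t.other) (hbs : I.ord.lt b s)
    (hcount : I.typeCount E t.other + 2 ≤ I.typeCount E t) :
    ParityInvariant I T t (insert b (E.erase s)) := by
  let _ := I.ord
  have hbs_ne : I.mtype b ≠ I.mtype s := by rw [hbt, hst]; exact MType.other_ne t
  have hmem_t {c : C} (hc : c ∈ insert b (E.erase s)) (hct : I.mtype c = t) :
      c ∈ E ∧ I.ord.lt s c := by
    rcases mem_insert.mp hc with rfl | hc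
    · exact absurd (hbt.symm.trans hct) (MType.other_ne t)
    · obtain ⟨hcs, hcE⟩ := mem_erase.mp hc
      exact ⟨hcE, lt_of_le_of_ne (hs_min c hcE hct) (Ne.symm hcs)⟩
  have hcount_t := I.typeCount_insert_erase_of_mem hsE hbs_ne
  have hcount_o := I.typeCount_insert_erase_of_notMem hbE hbs_ne.symm
  rw [hst] at hcount_t
  rw [hbt] at hcount_o
  refine
    { added_mtype := fun c hc => ?_
      removed_mtype := fun c hc => ?_
      added_lt := fun c hc c' hc' hc't => ?_
      removed_lt := fun c hc c' hc' hc't => ?_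
      typeCount_le := by omega
      card_eq := ?_ }
  · rcases mem_insert.mp (insert_erase_sdiff_subset hc) with rfl | hc
    exacts [hbt, hinv.added_mtype c hc]
  · rcases mem_insert.mp (sdiff_insert_erase_subset hc) with rfl | hc
    exacts [hst, hinv.removed_mtype c hc]
  · obtain ⟨hc'E, hsc'⟩ := hmem_t hc' hc't
    rcases mem_insert.mp (insert_erase_sdiff_subset hc) with rfl | hc
    exacts [hbs.trans hsc', hinv.added_lt c hc c' hc'E hc't]
  · obtain ⟨hc'E, hsc'⟩ := hmem_t hc' hc't
    rcases mem_insert.mp (sdiff_insert_erase_subset hc) with rfl | hc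
    exacts [hsc', hinv.removed_lt c hc c' hc'E hc't]
  · rw [card_insert_of_notMem (fun h => hbE (mem_of_mem_erase h)), card_erase_add_one hsE,
      hinv.card_eq]

theorem swapStep {J : Fin n → ℕ} (hinv : ParityInvariant I (I.oblivious J) t E)
    (hA : ¬ I.CondA E) : ParityInvariant I (I.oblivious J) t (I.swapStep E) := by
  let _ := I.ord
  have hcount := hinv.typeCount_other_add_two_le hA
  have hover : I.overType E = t := I.overType_eq_of_lt (by omega)
  have hne : (E.filter fun c => I.mtype c = t).Nonempty :=
    card_pos.mp (by simp only [typeCount] at hcount; omega)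
  set s := (E.filter fun c => I.mtype c = t).min' hne
  obtain ⟨hsE, hst⟩ := mem_filter.mp (min'_mem _ hne)
  have hs_min (c : C) (hcE : c ∈ E) (hct : I.mtype c = t) : s ≤ c :=
    min'_le _ c (mem_filter.mpr ⟨hcE, hct⟩)
  unfold TypedInstance.swapStep
  simp only [hover, dif_pos hne]
  split_ifs with hpool
  · obtain ⟨-, hbE, hbparty, hbt⟩ := mem_filter.mp (max'_mem _ hpool)
    have hsT : s ∈ I.oblivious J := by
      by_contra hsT
      exact MType.other_ne t (hst ▸ hinv.added_mtype _ (mem_sdiff.mpr ⟨hsE, hsT⟩)).symm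
    have hbT : _ ∉ I.oblivious J := fun hbT =>
      MType.other_ne t (hbt ▸ hinv.removed_mtype _ (mem_sdiff.mpr ⟨hbT, hbE⟩))
    exact hinv.insert_erase hsE hst hs_min hbE hbt
      (I.lt_of_mem_oblivious_of_notMem hsT hbT hbparty) hcount
  · exact hinv

theorem greedyAux {J : Fin n → ℕ} (hinv : ParityInvariant I (I.oblivious J) t E) (k : ℕ) :
    ParityInvariant I (I.oblivious J) t (I.greedyAux k E) := by
  induction k generalizing E with
  | zero => exact hinv
  | succ k ih =>
    by_cases hA : I.CondA E
    · simpa [TypedInstance.greedyAux, hA] using hinv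
    · simpa [TypedInstance.greedyAux, hA] using ih (hinv.swapStep hA)

theorem agreeUpTo_rank (hinv : ParityInvariant I T t E) {c : C} (hcE : c ∈ E)
    (hct : I.mtype c = t) : I.agreeUpTo E T (I.rank c) := by
  intro c₀ hc₀
  by_contra hdiff
  have hlt : I.ord.lt c₀ c := by
    by_cases hc₀E : c₀ ∈ E
    · exact hinv.added_lt c₀ (mem_sdiff.mpr ⟨hc₀E, fun h => hdiff (iff_of_true hc₀E h)⟩)
        c hcE hct
    · exact hinv.removed_lt c₀
        (mem_sdiff.mpr ⟨by_contra fun h => hdiff (iff_of_false hc₀E h), hc₀E⟩) c hcE hct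
  exact (I.rank_lt_rank hlt).not_ge hc₀

end ParityInvariant

end TypedInstance

theorem stmt9_general {n : ℕ} {C : Type} [Fintype C] [DecidableEq C]
    (γ : ℕ → ℝ)
    (I : TypedInstance n C) (hsup : I.SupplyCond)
    (J : Fin n → ℕ) (hJ : J ∈ divisorSet γ I.Q I.h)
    (tstar : MType)
    (hover : I.typeCount (I.oblivious J) tstar.other <
      I.typeCount (I.oblivious J) tstar)
    (l : ℕ) (hl : l = I.prefixLen (I.greedy J) (I.oblivious J)) :
    ∀ c : C, I.mtype c = tstar → c ∈ I.greedy J → I.rank c ≤ l := by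
  intro c hct hcE
  have hinv := (TypedInstance.ParityInvariant.of_oblivious hsup hJ.1 hover).greedyAux I.h
  exact hl ▸ I.le_prefixLen (hinv.agreeUpTo_rank hcE hct) (I.rank_le_card c)

/-- every elected candidate of the over-represented type has rank
at most `ℓ = Prefix(V(E_J), V(T_J))`. -/
theorem stmt9 {n : ℕ} {C : Type} [Fintype C] [DecidableEq C]
    (γ : ℕ → ℝ) (hγ : Signpost γ)
    (I : TypedInstance n C) (hsup : I.SupplyCond)
    (J : Fin n → ℕ) (hJ : J ∈ divisorSet γ I.Q I.h)
    (hpar : ¬ I.CondA (I.oblivious J))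
    (tstar : MType)
    (hover : I.typeCount (I.oblivious J) tstar.other <
      I.typeCount (I.oblivious J) tstar)
    (l : ℕ) (hl : l = I.prefixLen (I.greedy J) (I.oblivious J))
    (hlt : l < Fintype.card C) :
    ∀ c : C, I.mtype c = tstar → c ∈ I.greedy J → I.rank c ≤ l :=
  stmt9_general γ I hsup J hJ tstar hover l hl
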